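/- Let R > 0 and h ∈ (0, R]. For a ∈ ℝ³ let S(a) = {(v, c) ∈ S² × ℝ³ : ‖a − c‖ ≤ R and ⟨a − c, v⟩ ≥ R − h}, i.e., the set of parameter pairs (direction, center) whose spherical cap contains a. Then μ(S(a)) = 4π · (π/3)·h²·(3R − h); moreover, if ‖a‖ ≤ R then S(a) ⊆ S² × {c ∈ ℝ³ : ‖c‖ ≤ 2R}. -/

import Mathlib

/-! Fubini over the direction `v`: for fixed `v`, the set of centers `c` whose cap contains `a`
is the reflected translate `a - solidCap R h v` of the cap at the origin, so its volume is the
volume of a cap. That volume does not depend on the unit vector `v`, since a linear isometry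
(a reflection) moves `v` to any other unit vector; in the model `ℝ × ℝ²` with direction `(1, 0)`
the slices are discs of area `π (R² - t²)`, `R - h ≤ t ≤ R`, giving `π h² (3R - h) / 3`.
Integrating this constant over the sphere, of area `3 · vol(ball 0 1) = 4π`, gives the claim. -/

open scoped RealInnerProductSpace
open Real MeasureTheory Metric

noncomputable def capParamMeasure :
    Measure (sphere (0 : EuclideanSpace ℝ (Fin 3)) 1 × EuclideanSpace ℝ (Fin 3)) :=
  ((volume : Measure (EuclideanSpace ℝ (Fin 3))).toSphere).prod volume

def capParams (R h : ℝ) (a : EuclideanSpace ℝ (Fin 3)) :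
    Set (sphere (0 : EuclideanSpace ℝ (Fin 3)) 1 × EuclideanSpace ℝ (Fin 3)) :=
  {p | ‖a - p.2‖ ≤ R ∧ R - h ≤ ⟪a - p.2, (p.1 : EuclideanSpace ℝ (Fin 3))⟫}

def solidCap {E : Type*} [NormedAddCommGroup E] [InnerProductSpace ℝ E] (R h : ℝ) (v : E) :
    Set E :=
  {x | ‖x‖ ≤ R ∧ R - h ≤ ⟪x, v⟫}

section SolidCap

variable {E F : Type*} [NormedAddCommGroup E] [InnerProductSpace ℝ E]
  [NormedAddCommGroup F] [InnerProductSpace ℝ F]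

theorem isClosed_solidCap (R h : ℝ) (v : E) : IsClosed (solidCap R h v) :=
  show IsClosed ({x | ‖x‖ ≤ R} ∩ {x | R - h ≤ ⟪x, v⟫}) from
    (isClosed_le continuous_norm continuous_const).inter
      (isClosed_le continuous_const (continuous_id.inner continuous_const))

theorem LinearIsometryEquiv.preimage_solidCap (f : E ≃ₗᵢ[ℝ] F) (R h : ℝ) (v : E) :
    f ⁻¹' solidCap R h (f v) = solidCap R h v := by
  ext x
  simp [solidCap, f.inner_map_map]

theorem LinearIsometryEquiv.exists_apply_eq [FiniteDimensional ℝ E] [FiniteDimensional ℝ F]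
    (hEF : Module.finrank ℝ E = Module.finrank ℝ F) {v : E} {w : F} (hvw : ‖v‖ = ‖w‖) :
    ∃ f : E ≃ₗᵢ[ℝ] F, f v = w := by
  let f₀ : E ≃ₗᵢ[ℝ] F := (stdOrthonormalBasis ℝ E).repr.trans
    ((stdOrthonormalBasis ℝ F).reindex (finCongr hEF.symm)).repr.symm
  exact ⟨f₀.trans (ℝ ∙ (f₀ v - w))ᗮ.reflection,
    Submodule.reflection_sub ((f₀.norm_map v).trans hvw)⟩

variable [FiniteDimensional ℝ E] [MeasurableSpace E] [BorelSpace E]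
  [FiniteDimensional ℝ F] [MeasurableSpace F] [BorelSpace F]

theorem volume_solidCap_congr (hEF : Module.finrank ℝ E = Module.finrank ℝ F) (R h : ℝ)
    {v : E} {w : F} (hvw : ‖v‖ = ‖w‖) :
    volume (solidCap R h v) = volume (solidCap R h w) := by
  obtain ⟨f, rfl⟩ := LinearIsometryEquiv.exists_apply_eq hEF hvw
  rw [← f.preimage_solidCap, f.measurePreserving.measure_preimage
    (isClosed_solidCap R h _).measurableSet.nullMeasurableSet]

end SolidCap

theorem EuclideanSpace.volume_setOf_norm_sq_le_fin_two (r : ℝ) :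
    volume {w : EuclideanSpace ℝ (Fin 2) | ‖w‖ ^ 2 ≤ r} = ENNReal.ofReal (π * r) := by
  rcases lt_or_ge r 0 with hr | hr
  · have : {w : EuclideanSpace ℝ (Fin 2) | ‖w‖ ^ 2 ≤ r} = ∅ :=
      Set.eq_empty_of_forall_notMem fun w hw => (hw.trans_lt hr).not_ge (sq_nonneg _)
    rw [this, measure_empty,
      ENNReal.ofReal_of_nonpos (mul_nonpos_of_nonneg_of_nonpos pi_nonneg hr.le)]
  · have : {w : EuclideanSpace ℝ (Fin 2) | ‖w‖ ^ 2 ≤ r} = closedBall 0 √r := by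
      ext w
      simp [Real.le_sqrt (norm_nonneg w) hr]
    rw [this, EuclideanSpace.volume_closedBall_fin_two, ← ENNReal.ofReal_pow (sqrt_nonneg r),
      sq_sqrt hr, ← ENNReal.ofReal_mul hr, mul_comm]

theorem lintegral_Ici_ofReal_pi_mul_sq_sub_sq {R h : ℝ} (hh : 0 ≤ h) (hhR : h ≤ 2 * R) :
    ∫⁻ t in Set.Ici (R - h), ENNReal.ofReal (π * (R ^ 2 - t ^ 2)) =
      ENNReal.ofReal (π / 3 * h ^ 2 * (3 * R - h)) := by
  have hdisj : Disjoint (Set.Icc (R - h) R) (Set.Ioi R) :=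
    Set.disjoint_left.mpr fun t ht ht' => (ht.2.trans_lt ht').false
  have hIoi : ∫⁻ t in Set.Ioi R, ENNReal.ofReal (π * (R ^ 2 - t ^ 2)) = 0 := by
    refine setLIntegral_eq_zero measurableSet_Ioi fun t ht => ENNReal.ofReal_of_nonpos ?_
    have : R ^ 2 ≤ t ^ 2 := by nlinarith [Set.mem_Ioi.mp ht]
    nlinarith [pi_pos]
  rw [← Set.Icc_union_Ioi_eq_Ici (by linarith), lintegral_union measurableSet_Ioi hdisj, hIoi,
    add_zero, ← ofReal_integral_eq_lintegral_ofReal]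
  · rw [integral_Icc_eq_integral_Ioc, ← intervalIntegral.integral_of_le (by linarith)]
    congr 1
    simp only [intervalIntegral.integral_const_mul, intervalIntegral.integral_sub,
      intervalIntegrable_const, intervalIntegral.intervalIntegrable_pow,
      intervalIntegral.integral_const, integral_pow, sub_sub_cancel, smul_eq_mul]
    ring
  · exact Continuous.integrableOn_Icc (by fun_prop)
  · refine ae_restrict_of_forall_mem measurableSet_Icc fun t ht => ?_
    have : t ^ 2 ≤ R ^ 2 := by nlinarith [ht.1, ht.2]
    exact mul_nonneg pi_pos.le (by linarith)

theorem volume_solidCap_prod_fin_two {R h : ℝ} (hh : 0 ≤ h) (hhR : h ≤ 2 * R) :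
    volume (solidCap R h (WithLp.toLp 2 ((1 : ℝ), (0 : EuclideanSpace ℝ (Fin 2))))) =
      ENNReal.ofReal (π / 3 * h ^ 2 * (3 * R - h)) := by
  have hR : 0 ≤ R := by linarith
  set T : Set (ℝ × EuclideanSpace ℝ (Fin 2)) := {p | p.1 ^ 2 + ‖p.2‖ ^ 2 ≤ R ^ 2 ∧ R - h ≤ p.1}
  have hT : WithLp.toLp 2 ⁻¹' solidCap R h (WithLp.toLp 2 (1, 0)) = T := by
    ext p
    simp [solidCap, T, ← sq_le_sq₀ (norm_nonneg _) hR, WithLp.prod_norm_sq_eq_of_L2]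
  have hmp := WithLp.volume_preserving_toLp ℝ (EuclideanSpace ℝ (Fin 2))
  have hTmeas : MeasurableSet T :=
    hT ▸ (isClosed_solidCap R h _).measurableSet.preimage hmp.measurable
  have hslice (t : ℝ) : volume (Prod.mk t ⁻¹' T) =
      (Set.Ici (R - h)).indicator (fun t => ENNReal.ofReal (π * (R ^ 2 - t ^ 2))) t := by
    by_cases ht : R - h ≤ t
    · rw [Set.indicator_of_mem (Set.mem_Ici.mpr ht),
        ← EuclideanSpace.volume_setOf_norm_sq_le_fin_two]
      congr 1
      ext w
      simp only [T, Set.mem_preimage, Set.mem_ofPred_eq, ht, and_true, le_sub_iff_add_le']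
    · rw [Set.indicator_of_notMem (mt Set.mem_Ici.mp ht)]
      convert measure_empty (μ := volume)
      exact Set.eq_empty_of_forall_notMem fun w hw => ht hw.2
  rw [← hmp.measure_preimage (isClosed_solidCap R h _).measurableSet.nullMeasurableSet, hT,
    Measure.volume_eq_prod, Measure.prod_apply hTmeas]
  simp only [hslice, lintegral_indicator measurableSet_Ici]
  exact lintegral_Ici_ofReal_pi_mul_sq_sub_sq hh hhR

theorem volume_solidCap {E : Type*} [NormedAddCommGroup E] [InnerProductSpace ℝ E]
    [FiniteDimensional ℝ E] [MeasurableSpace E] [BorelSpace E] (hE : Module.finrank ℝ E = 3)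
    {R h : ℝ} (hh : 0 ≤ h) (hhR : h ≤ 2 * R) {v : E} (hv : ‖v‖ = 1) :
    volume (solidCap R h v) = ENNReal.ofReal (π / 3 * h ^ 2 * (3 * R - h)) := by
  have hF : Module.finrank ℝ (WithLp 2 (ℝ × EuclideanSpace ℝ (Fin 2))) = 3 := by
    rw [(WithLp.linearEquiv 2 ℝ (ℝ × EuclideanSpace ℝ (Fin 2))).finrank_eq]
    simp
  rw [volume_solidCap_congr (hE.trans hF.symm) R h
    (hv.trans (by simp) : ‖v‖ = ‖WithLp.toLp 2 ((1 : ℝ), (0 : EuclideanSpace ℝ (Fin 2)))‖)]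
  exact volume_solidCap_prod_fin_two hh hhR

theorem EuclideanSpace.toSphere_volume_univ_fin_three :
    (volume : Measure (EuclideanSpace ℝ (Fin 3))).toSphere Set.univ = ENNReal.ofReal (4 * π) := by
  rw [Measure.toSphere_apply_univ, EuclideanSpace.volume_ball_fin_three,
    finrank_euclideanSpace_fin, ENNReal.ofReal_one, one_pow, one_mul, ← ENNReal.ofReal_natCast,
    ← ENNReal.ofReal_mul (by norm_num)]
  congr 1
  push_cast
  ring

theorem measurableSet_capParams (R h : ℝ) (a : EuclideanSpace ℝ (Fin 3)) :
    MeasurableSet (capParams R h a) := by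
  refine IsClosed.measurableSet ?_
  rw [capParams, Set.ofPred_and]
  exact (isClosed_le (continuous_const.sub continuous_snd).norm continuous_const).inter
    (isClosed_le continuous_const
      ((continuous_const.sub continuous_snd).inner (continuous_subtype_val.comp continuous_fst)))

theorem volume_preimage_mk_capParams {R h : ℝ} (hh : 0 ≤ h) (hhR : h ≤ 2 * R)
    (a : EuclideanSpace ℝ (Fin 3)) (v : sphere (0 : EuclideanSpace ℝ (Fin 3)) 1) :
    volume (Prod.mk v ⁻¹' capParams R h a) = ENNReal.ofReal (π / 3 * h ^ 2 * (3 * R - h)) := by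
  change volume ((a - ·) ⁻¹' solidCap R h (v : EuclideanSpace ℝ (Fin 3))) = _
  rw [(Measure.measurePreserving_sub_left volume a).measure_preimage
    (isClosed_solidCap R h _).measurableSet.nullMeasurableSet]
  exact volume_solidCap finrank_euclideanSpace_fin hh hhR (norm_eq_of_mem_sphere v)

theorem norm_le_two_mul_of_mem_capParams {R h : ℝ} {a : EuclideanSpace ℝ (Fin 3)} (ha : ‖a‖ ≤ R)
    {p : sphere (0 : EuclideanSpace ℝ (Fin 3)) 1 × EuclideanSpace ℝ (Fin 3)}
    (hp : p ∈ capParams R h a) : ‖p.2‖ ≤ 2 * R := by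
  linarith [norm_le_insert a p.2, hp.1]

theorem measure_capParams :
    ∀ R : ℝ, 0 < R → ∀ h : ℝ, 0 < h → h ≤ R →
      ∀ a : EuclideanSpace ℝ (Fin 3),
        capParamMeasure (capParams R h a) =
          ENNReal.ofReal (4 * π * (π / 3 * h ^ 2 * (3 * R - h))) ∧
        (‖a‖ ≤ R → ∀ p ∈ capParams R h a, ‖p.2‖ ≤ 2 * R) := by
  intro R _ h hh hhR a
  refine ⟨?_, fun ha p hp => norm_le_two_mul_of_mem_capParams ha hp⟩
  rw [capParamMeasure, Measure.prod_apply (measurableSet_capParams R h a)]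
  simp only [volume_preimage_mk_capParams hh.le (by linarith : h ≤ 2 * R)]
  rw [lintegral_const, EuclideanSpace.toSphere_volume_univ_fin_three, mul_comm,
    ← ENNReal.ofReal_mul (by positivity)]
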